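/- arXiv:1301.6667 — 2 statements merged into one kernel-verified Lean document; each statement's English description precedes it below -/
import Mathlib

section
/- Let S = {p₁, p₁', p₂, p₂', p₃, p₃'} be an antipodal point set of 6 points on the unit circle with circular order p₁, p₂, p₃, p₁', p₂', p₃'. Then each of the two non-thin antipodal triangles (with vertex sets {p₁, p₂', p₃} and {p₁', p₂, p₃'}) has strictly larger area than every thin antipodal triangle on S. -/
open MeasureTheory

/-- The point on the unit circle at angle `θ`. -/
noncomputable def pt (θ : ℝ) : ℝ × ℝ := (Real.cos θ, Real.sin θ)

/-- Standard dot product in the plane. -/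
noncomputable def dotp (v w : ℝ × ℝ) : ℝ := v.1 * w.1 + v.2 * w.2

/-- Given angles `θ : Fin n → ℝ` (determining the antipodal point set
`{pt (θ i)} ∪ {-pt (θ i)}`) and a selection `ε`, the `i`-th vertex of the
corresponding antipodal polygon: `pt (θ i)` if `ε i` and `-pt (θ i)` otherwise. -/
noncomputable def vtx {n : ℕ} (θ : Fin n → ℝ) (ε : Fin n → Bool) (i : Fin n) : ℝ × ℝ :=
  if ε i then pt (θ i) else -pt (θ i)

/-- The antipodal polygon determined by the selection `ε`. -/
noncomputable def apoly {n : ℕ} (θ : Fin n → ℝ) (ε : Fin n → Bool) : Set (ℝ × ℝ) :=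
  convexHull ℝ (Set.range (vtx θ ε))

/-- The antipodal polygon is thin: all vertices lie in a closed half-plane
bounded by a line through the origin. -/
def Thin {n : ℕ} (θ : Fin n → ℝ) (ε : Fin n → Bool) : Prop :=
  ∃ v : ℝ × ℝ, v ≠ 0 ∧ ∀ i, 0 ≤ dotp v (vtx θ ε i)

/-- The antipodal polygon is thick: every open half-plane bounded by a line
through the origin contains at least `⌈(n-2)/2⌉ = (n-1)/2` of its vertices. -/
def Thick {n : ℕ} (θ : Fin n → ℝ) (ε : Fin n → Bool) : Prop :=
  ∀ v : ℝ × ℝ, v ≠ 0 →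
    (n - 1) / 2 ≤ Set.ncard {i : Fin n | 0 < dotp v (vtx θ ε i)}

/-- The `j`-th point (indices mod `2*n`) of the antipodal point set in circular
order `pt (θ 0), …, pt (θ (n-1)), -pt (θ 0), …, -pt (θ (n-1))`. -/
noncomputable def spt {n : ℕ} (θ : Fin n → ℝ) (j : ℕ) : ℝ × ℝ :=
  if h : j % (2 * n) < n then pt (θ ⟨j % (2 * n), h⟩)
  else if h2 : j % (2 * n) - n < n then -pt (θ ⟨j % (2 * n) - n, h2⟩) else 0

/-- Whether the `j`-th point (indices mod `2*n`) of the antipodal point set, in the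
circular order `pt (θ 0), …, pt (θ (n-1)), -pt (θ 0), …, -pt (θ (n-1))`,
is a vertex of the antipodal polygon selected by `ε`. -/
def chosen {n : ℕ} (ε : Fin n → Bool) (j : ℕ) : Bool :=
  if h : j % (2 * n) < n then ε ⟨j % (2 * n), h⟩
  else if h2 : j % (2 * n) - n < n then !(ε ⟨j % (2 * n) - n, h2⟩) else false

/-! The triangle with vertices `σᵢ • pt θᵢ` (`σᵢ = ±1`) has doubled signed area
`σ₀σ₁ sin (θ₁ - θ₀) + σ₁σ₂ sin (θ₂ - θ₁) + σ₂σ₀ sin (θ₀ - θ₂)`, whose three sines have the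
fixed signs `+, +, -` because the angles span less than `π`. Its absolute value therefore
attains `sin (θ₁ - θ₀) + sin (θ₂ - θ₁) - sin (θ₀ - θ₂)` when the selection alternates (the two
non-thin triangles) and is strictly smaller otherwise. A thin triangle never alternates:
`pt θ₁` is a positive combination of `pt θ₀` and `pt θ₂`, so no nonzero `v` can have
nonnegative inner product with `pt θ₀`, `-pt θ₁` and `pt θ₂`. -/

open Pointwise Real

noncomputable def cross (u v : ℝ × ℝ) : ℝ := u.1 * v.2 - v.1 * u.2

def stdTriangle : Set (ℝ × ℝ) := {z | 0 ≤ z.1 ∧ 0 ≤ z.2 ∧ z.1 + z.2 ≤ 1}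

lemma convex_stdTriangle : Convex ℝ stdTriangle := by
  rintro x ⟨hx1, hx2, hx3⟩ y ⟨hy1, hy2, hy3⟩ a b ha hb hab
  refine ⟨?_, ?_, ?_⟩ <;> simp only [Prod.fst_add, Prod.snd_add, Prod.smul_fst, Prod.smul_snd,
    smul_eq_mul]
  · positivity
  · positivity
  · nlinarith

lemma convexHull_eq_stdTriangle :
    convexHull ℝ {(0 : ℝ × ℝ), (1, 0), (0, 1)} = stdTriangle := by
  refine (convexHull_min ?_ convex_stdTriangle).antisymm fun z ⟨h1, h2, h3⟩ => ?_
  · rintro z (rfl | rfl | rfl) <;> norm_num [stdTriangle]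
  · have hmem := (convex_convexHull ℝ {(0 : ℝ × ℝ), (1, 0), (0, 1)}).sum_mem (t := Finset.univ)
      (w := ![1 - z.1 - z.2, z.1, z.2]) (z := ![0, (1, 0), (0, 1)])
      (fun i _ => by fin_cases i <;> simp <;> linarith) (by simp [Fin.sum_univ_three]; ring)
      (fun i _ => subset_convexHull ℝ _ (by fin_cases i <;> simp))
    simpa [Fin.sum_univ_three] using hmem

lemma measurableSet_stdTriangle : MeasurableSet stdTriangle :=
  (measurableSet_le measurable_const measurable_fst).inter
    ((measurableSet_le measurable_const measurable_snd).inter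
      (measurableSet_le (measurable_fst.add measurable_snd) measurable_const))

lemma volume_stdTriangle : volume stdTriangle = ENNReal.ofReal (1 / 2) := by
  have hslice (x : ℝ) : volume (Prod.mk x ⁻¹' stdTriangle)
      = (Set.Icc 0 1).indicator (fun x => ENNReal.ofReal (1 - x)) x := by
    by_cases hx : x ∈ Set.Icc 0 1
    · have : Prod.mk x ⁻¹' stdTriangle = Set.Icc 0 (1 - x) := by
        ext y; simp only [stdTriangle, Set.mem_preimage, Set.mem_ofPred_eq, Set.mem_Icc]
        constructor
        · rintro ⟨-, h1, h2⟩; exact ⟨h1, by linarith⟩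
        · rintro ⟨h1, h2⟩; exact ⟨hx.1, h1, by linarith⟩
      rw [this, Real.volume_Icc, sub_zero, Set.indicator_of_mem hx]
    · have : Prod.mk x ⁻¹' stdTriangle = ∅ := by
        ext y
        simp only [stdTriangle, Set.mem_preimage, Set.mem_ofPred_eq, Set.mem_empty_iff_false,
          iff_false]
        rintro ⟨h0, h1, h2⟩; exact hx ⟨h0, by linarith⟩
      rw [this, measure_empty, Set.indicator_of_notMem hx]
  rw [Measure.volume_eq_prod, Measure.prod_apply measurableSet_stdTriangle]
  simp_rw [hslice]
  rw [lintegral_indicator measurableSet_Icc, ← ofReal_integral_eq_lintegral_ofReal,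
    integral_Icc_eq_integral_Ioc, ← intervalIntegral.integral_of_le zero_le_one]
  · rw [intervalIntegral.integral_sub intervalIntegrable_const
      intervalIntegral.intervalIntegrable_id]
    norm_num [integral_id]
  · exact (continuous_const.sub continuous_id).integrableOn_Icc
  · filter_upwards [ae_restrict_mem measurableSet_Icc] with x hx
    exact sub_nonneg.2 hx.2

theorem volume_convexHull_triple (p q r : ℝ × ℝ) :
    volume (convexHull ℝ {p, q, r}) = ENNReal.ofReal (|cross (q - p) (r - p)| / 2) := by
  let b := Module.Basis.finTwoProd ℝ
  let L := Matrix.toLin b b !![(q - p).1, (r - p).1; (q - p).2, (r - p).2]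
  have hL1 : L (1, 0) = q - p := by
    rw [← Module.Basis.finTwoProd_zero, Matrix.toLin_self]; simp [b, Prod.ext_iff]
  have hL2 : L (0, 1) = r - p := by
    rw [← Module.Basis.finTwoProd_one, Matrix.toLin_self]; simp [b, Prod.ext_iff]
  have hhull : convexHull ℝ {p, q, r} = p +ᵥ L '' stdTriangle := by
    rw [← convexHull_eq_stdTriangle, L.image_convexHull, ← convexHull_vadd]
    simp [Set.image_insert_eq, hL1, hL2, Set.vadd_set_insert]
  rw [hhull, measure_vadd, Measure.addHaar_image_linearMap, LinearMap.det_toLin,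
    Matrix.det_fin_two_of, volume_stdTriangle, ← ENNReal.ofReal_mul (abs_nonneg _)]
  congr 1
  rw [cross]; ring

lemma cross_sub_sub (p q r : ℝ × ℝ) :
    cross (q - p) (r - p) = cross p q + cross q r + cross r p := by
  simp only [cross, Prod.fst_sub, Prod.snd_sub]; ring

lemma cross_smul_smul (s t : ℝ) (u v : ℝ × ℝ) : cross (s • u) (t • v) = s * t * cross u v := by
  simp only [cross, Prod.smul_fst, Prod.smul_snd, smul_eq_mul]; ring

lemma cross_pt_pt (x y : ℝ) : cross (pt x) (pt y) = sin (y - x) := by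
  rw [cross, pt, pt, sin_sub]; ring

lemma dotp_smul_right (v w : ℝ × ℝ) (s : ℝ) : dotp v (s • w) = s * dotp v w := by
  simp only [dotp, Prod.smul_fst, Prod.smul_snd, smul_eq_mul]; ring

lemma dotp_smul_left (v w : ℝ × ℝ) (s : ℝ) : dotp (s • v) w = s * dotp v w := by
  simp only [dotp, Prod.smul_fst, Prod.smul_snd, smul_eq_mul]; ring

lemma dotp_add_right (v w w' : ℝ × ℝ) : dotp v (w + w') = dotp v w + dotp v w' := by
  simp only [dotp, Prod.fst_add, Prod.snd_add]; ring

lemma sin_sub_smul_pt (a b c : ℝ) :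
    sin (c - a) • pt b = sin (c - b) • pt a + sin (b - a) • pt c := by
  ext <;> simp only [pt, sin_sub, Prod.smul_fst, Prod.smul_snd, Prod.fst_add, Prod.snd_add,
    smul_eq_mul] <;> ring

lemma eq_zero_of_dotp_pt {a b c : ℝ} (hab : a < b) (hbc : b < c) (hca : c - a < π)
    {v : ℝ × ℝ} (ha : 0 ≤ dotp v (pt a)) (hb : dotp v (pt b) ≤ 0) (hc : 0 ≤ dotp v (pt c)) :
    v = 0 := by
  have sab : 0 < sin (b - a) := sin_pos_of_pos_of_lt_pi (by linarith) (by linarith)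
  have sbc : 0 < sin (c - b) := sin_pos_of_pos_of_lt_pi (by linarith) (by linarith)
  have sac : 0 < sin (c - a) := sin_pos_of_pos_of_lt_pi (by linarith) (by linarith)
  have hcomb : sin (c - a) * dotp v (pt b)
      = sin (c - b) * dotp v (pt a) + sin (b - a) * dotp v (pt c) := by
    rw [← dotp_smul_right, sin_sub_smul_pt, dotp_add_right, dotp_smul_right, dotp_smul_right]
  have hb' := mul_nonpos_of_nonneg_of_nonpos sac.le hb
  have ha0 : dotp v (pt a) = 0 := by nlinarith [mul_nonneg sab.le hc]
  have hc0 : dotp v (pt c) = 0 := by nlinarith [mul_nonneg sbc.le ha]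
  simp only [dotp, pt] at ha0 hc0
  have h1 : v.1 * sin (c - a) = 0 := by
    rw [sin_sub]; linear_combination sin c * ha0 - sin a * hc0
  have h2 : v.2 * sin (c - a) = 0 := by
    rw [sin_sub]; linear_combination cos a * hc0 - cos c * ha0
  exact Prod.ext (by simpa [sac.ne'] using h1) (by simpa [sac.ne'] using h2)

def signOfBool (b : Bool) : ℝ := if b then 1 else -1

lemma vtx_eq_smul {n : ℕ} (θ : Fin n → ℝ) (ε : Fin n → Bool) (i : Fin n) :
    vtx θ ε i = signOfBool (ε i) • pt (θ i) := by
  unfold vtx signOfBool; split_ifs <;> simp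

lemma signOfBool_of_ne {a b : Bool} (h : a ≠ b) : signOfBool b = -signOfBool a := by
  cases a <;> cases b <;> simp_all [signOfBool]

lemma not_thin_of_alternating {θ : Fin 3 → ℝ} (hmono : StrictMono θ) (hspan : θ 2 - θ 0 < π)
    {ε : Fin 3 → Bool} (h01 : ε 0 ≠ ε 1) (h12 : ε 1 ≠ ε 2) : ¬Thin θ ε := by
  rintro ⟨v, hv, hvtx⟩
  set s := signOfBool (ε 0)
  have hs1 : signOfBool (ε 1) = -s := signOfBool_of_ne h01
  have hs2 : signOfBool (ε 2) = s := by rw [signOfBool_of_ne h12, hs1, neg_neg]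
  have hs : s ≠ 0 := by unfold s signOfBool; split_ifs <;> norm_num
  have d0 := hvtx 0
  have d1 := hvtx 1
  have d2 := hvtx 2
  rw [vtx_eq_smul, dotp_smul_right] at d0 d1 d2
  rw [hs1] at d1
  rw [hs2] at d2
  have hsv : s • v = 0 := by
    refine eq_zero_of_dotp_pt (hmono (by decide : (0 : Fin 3) < 1)) (hmono (by decide)) hspan
      ?_ ?_ ?_ <;> rw [dotp_smul_left]
    · exact d0
    · linarith
    · exact d2
  exact hv ((smul_eq_zero.mp hsv).resolve_left hs)

lemma range_fin_three {α : Type*} (f : Fin 3 → α) : Set.range f = {f 0, f 1, f 2} := by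
  ext; simp [Fin.exists_fin_succ, eq_comm]

noncomputable def doubledSignedArea (θ : Fin 3 → ℝ) (ε : Fin 3 → Bool) : ℝ :=
  signOfBool (ε 0) * signOfBool (ε 1) * sin (θ 1 - θ 0)
    + signOfBool (ε 1) * signOfBool (ε 2) * sin (θ 2 - θ 1)
    + signOfBool (ε 2) * signOfBool (ε 0) * sin (θ 0 - θ 2)

lemma volume_apoly_three (θ : Fin 3 → ℝ) (ε : Fin 3 → Bool) :
    volume (apoly θ ε) = ENNReal.ofReal (|doubledSignedArea θ ε| / 2) := by
  rw [apoly, range_fin_three, volume_convexHull_triple, cross_sub_sub]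
  simp only [vtx_eq_smul, cross_smul_smul, cross_pt_pt, doubledSignedArea]

lemma doubledSignedArea_of_alternating (θ : Fin 3 → ℝ) {ε : Fin 3 → Bool}
    (h01 : ε 0 ≠ ε 1) (h12 : ε 1 ≠ ε 2) :
    doubledSignedArea θ ε = -(sin (θ 1 - θ 0) + sin (θ 2 - θ 1) - sin (θ 0 - θ 2)) := by
  rw [doubledSignedArea]
  revert h01 h12
  cases ε 0 <;> cases ε 1 <;> cases ε 2 <;> simp [signOfBool] <;> ring

lemma abs_doubledSignedArea_lt {θ : Fin 3 → ℝ} (h01 : 0 < sin (θ 1 - θ 0))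
    (h12 : 0 < sin (θ 2 - θ 1)) (h20 : sin (θ 0 - θ 2) < 0) {ε : Fin 3 → Bool}
    (hε : ¬(ε 0 ≠ ε 1 ∧ ε 1 ≠ ε 2)) :
    |doubledSignedArea θ ε| < sin (θ 1 - θ 0) + sin (θ 2 - θ 1) - sin (θ 0 - θ 2) := by
  rw [doubledSignedArea, abs_lt]
  revert hε
  cases ε 0 <;> cases ε 1 <;> cases ε 2 <;> simp [signOfBool] <;> constructor <;> linarith

/-- For n = 3, each of the two non-thin antipodal triangles has strictly larger
area than every thin antipodal triangle. -/
theorem stmt_2 (θ : Fin 3 → ℝ) (hmono : StrictMono θ)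
    (hrange : ∀ i, θ i ∈ Set.Ico 0 Real.pi)
    (ε : Fin 3 → Bool) (hε : ε = ![true, false, true] ∨ ε = ![false, true, false])
    (ε' : Fin 3 → Bool) (hthin : Thin θ ε') :
    volume (apoly θ ε') < volume (apoly θ ε) := by
  have h01 : θ 0 < θ 1 := hmono (by decide)
  have h12 : θ 1 < θ 2 := hmono (by decide)
  have hspan : θ 2 - θ 0 < π := by linarith [(hrange 0).1, (hrange 2).2]
  have s01 : 0 < sin (θ 1 - θ 0) := sin_pos_of_pos_of_lt_pi (by linarith) (by linarith)
  have s12 : 0 < sin (θ 2 - θ 1) := sin_pos_of_pos_of_lt_pi (by linarith) (by linarith)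
  have s20 : sin (θ 0 - θ 2) < 0 := sin_neg_of_neg_of_neg_pi_lt (by linarith) (by linarith)
  have halt : ε 0 ≠ ε 1 ∧ ε 1 ≠ ε 2 := by rcases hε with rfl | rfl <;> decide
  have hnalt : ¬(ε' 0 ≠ ε' 1 ∧ ε' 1 ≠ ε' 2) := fun h =>
    not_thin_of_alternating hmono hspan h.1 h.2 hthin
  have hpos : 0 < sin (θ 1 - θ 0) + sin (θ 2 - θ 1) - sin (θ 0 - θ 2) := by linarith
  rw [volume_apoly_three, volume_apoly_three, doubledSignedArea_of_alternating θ halt.1 halt.2,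
    abs_neg, abs_of_pos hpos, ENNReal.ofReal_lt_ofReal_iff (by positivity)]
  linarith [abs_doubledSignedArea_lt s01 s12 s20 hnalt]
end

section
/- There exists an antipodal point set S of 10 points on the unit sphere S² ⊂ ℝ³ and two antipodal polytopes P₁, P₂ on S such that the origin is not in the interior of P₁, the origin is in the interior of P₂, and Vol(P₁) > Vol(P₂). Concretely, for sufficiently small ε > 0, with δ = √(1−2ε²), take v₁=(0,0,1), v₂=(δ,ε,ε), v₃=(−δ,ε,ε), v₄=(ε,δ,ε), v₅=(ε,−δ,ε); then P₁ = conv{v₁,…,v₅} does not contain the origin and has volume converging to 2/3 as ε → 0, while P₂ = conv{−v₁,−v₂,v₃,v₄,v₅} contains the origin in its interior and has volume converging to 1/3. -/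
/-!
Both polytopes split into two tetrahedra glued along a triangle. In `P1 e` the segments
`[w3 e, w2 e]` and `[w5 e, w4 e]` cross at `(e, e, e)`, so the plane through `w1, w4 e, w5 e` cuts
it into `conv {w3 e, w1, w4 e, w5 e}` and `conv {w2 e, w1, w4 e, w5 e}`; in `P2 e` the segment
`[-w2 e, w4 e]` crosses the triangle `(-w1, w3 e, w5 e)`, whose plane cuts it into
`conv {-w2 e, -w1, w3 e, w5 e}` and `conv {w4 e, -w1, w3 e, w5 e}`. A tetrahedron has volume
`|det| / 6`, the corner simplex `{x ≥ 0, ∑ xᵢ ≤ 1}` of `ℝⁿ` having volume `1 / n!`. The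
determinants are continuous in `e`, so the volumes tend to their values at `e = 0`, namely
`1/3 + 1/3` for `P1` and `1/3 + 0` for `P2`, and `1/3 < 2/3` gives the comparison for small `e`.
All vertices of `P1 e` have positive last coordinate, and `0` has positive barycentric coordinates
in `conv {-w1, w3 e, w4 e, w5 e} ⊆ P2 e`.
-/

open MeasureTheory Filter
open scoped ENNReal

/-- Apex of the pyramid. -/
noncomputable def w1 : Fin 3 → ℝ := ![0, 0, 1]
noncomputable def w2 (e : ℝ) : Fin 3 → ℝ := ![Real.sqrt (1 - 2 * e ^ 2), e, e]
noncomputable def w3 (e : ℝ) : Fin 3 → ℝ := ![-Real.sqrt (1 - 2 * e ^ 2), e, e]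
noncomputable def w4 (e : ℝ) : Fin 3 → ℝ := ![e, Real.sqrt (1 - 2 * e ^ 2), e]
noncomputable def w5 (e : ℝ) : Fin 3 → ℝ := ![e, -Real.sqrt (1 - 2 * e ^ 2), e]

/-- The "thin" antipodal polytope (a pyramid not containing the origin). -/
noncomputable def P1 (e : ℝ) : Set (Fin 3 → ℝ) :=
  convexHull ℝ {w1, w2 e, w3 e, w4 e, w5 e}

/-- The antipodal polytope obtained by flipping v₁ and v₂; it contains the
origin in its interior. -/
noncomputable def P2 (e : ℝ) : Set (Fin 3 → ℝ) :=
  convexHull ℝ {-w1, -(w2 e), w3 e, w4 e, w5 e}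

open Set
open scoped Nat

section Convex

variable {𝕜 E : Type*} [Field 𝕜] [LinearOrder 𝕜] [IsStrictOrderedRing 𝕜] [AddCommGroup E]
  [Module 𝕜 E]

lemma segment_eq_segment_union_segment {x y p : E} (hp : p ∈ segment 𝕜 x y) :
    segment 𝕜 x y = segment 𝕜 x p ∪ segment 𝕜 p y := by
  rw [segment_eq_image_lineMap] at hp ⊢
  obtain ⟨t, ⟨ht₀, ht₁⟩, rfl⟩ := hp
  rw [← Icc_union_Icc_eq_Icc ht₀ ht₁, image_union, ← segment_eq_Icc ht₀, ← segment_eq_Icc ht₁,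
    image_segment, image_segment]
  simp

theorem convexHull_insert_insert_eq_union {x y p : E} {T : Set E} (hpxy : p ∈ segment 𝕜 x y)
    (hpT : p ∈ convexHull 𝕜 T) :
    convexHull 𝕜 (insert x (insert y T))
      = convexHull 𝕜 (insert x T) ∪ convexHull 𝕜 (insert y T) := by
  have hT : T.Nonempty := convexHull_nonempty_iff.1 ⟨p, hpT⟩
  have hsub : ∀ z, segment 𝕜 z p ⊆ convexHull 𝕜 (insert z T) := fun z =>
    (convex_convexHull 𝕜 _).segment_subset (subset_convexHull 𝕜 _ (mem_insert _ _))
      (convexHull_mono (subset_insert _ _) hpT)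
  refine subset_antisymm ?_ (union_subset (convexHull_mono (insert_subset_insert
    (subset_insert _ _))) (convexHull_mono (subset_insert _ _)))
  rw [← singleton_union (a := y), ← insert_union, convexHull_union (insert_nonempty _ _) hT,
    convexHull_pair, segment_eq_segment_union_segment hpxy, convexJoin_union_left]
  exact union_subset_union
    (convexJoin_subset (hsub x) (convexHull_mono (subset_insert _ _)) (convex_convexHull 𝕜 _))
    (convexJoin_subset (segment_symm 𝕜 p y ▸ hsub y) (convexHull_mono (subset_insert _ _))
      (convex_convexHull 𝕜 _))

lemma smul_add_smul_add_smul_mem_convexHull {x y z : E} {a b c : 𝕜} (ha : 0 ≤ a) (hb : 0 ≤ b)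
    (hc : 0 ≤ c) (habc : a + b + c = 1) : a • x + b • y + c • z ∈ convexHull 𝕜 {x, y, z} := by
  have := (convex_convexHull 𝕜 {x, y, z}).sum_mem (t := Finset.univ) (w := ![a, b, c])
    (z := ![x, y, z]) ?_ ?_ ?_
  · simpa [Fin.sum_univ_three, add_assoc] using this
  · intro i _; fin_cases i <;> simpa
  · simpa [Fin.sum_univ_three, add_assoc] using habc
  · intro i _; fin_cases i <;> exact subset_convexHull 𝕜 _ (by simp)

end Convex

section Separation

variable {E : Type*} [NormedAddCommGroup E] [NormedSpace ℝ E] [MeasurableSpace E] [BorelSpace E]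
  [FiniteDimensional ℝ E] (μ : Measure E) [μ.IsAddHaarMeasure]

lemma addHaar_preimage_singleton {f : E →ₗ[ℝ] ℝ} (hf : f ≠ 0) (c : ℝ) : μ (f ⁻¹' {c}) = 0 := by
  have := Measure.addHaar_affineSubspace μ ((affineSpan ℝ {c}).comap f.toAffineMap) ?_
  · simpa using this
  intro htop
  have hc : ∀ x, f x = c := fun x => by
    have hx : x ∈ (affineSpan ℝ {c}).comap f.toAffineMap := htop ▸ AffineSubspace.mem_top ℝ E x
    simpa using hx
  exact hf (LinearMap.ext fun x => by simp [hc x, ← hc 0])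

theorem addHaar_convexHull_union_convexHull {s t : Set E} {f : E →ₗ[ℝ] ℝ} (hf : f ≠ 0) {c : ℝ}
    (hs : ∀ x ∈ s, f x ≤ c) (ht : ∀ x ∈ t, c ≤ f x) :
    μ (convexHull ℝ s ∪ convexHull ℝ t) = μ (convexHull ℝ s) + μ (convexHull ℝ t) := by
  refine measure_union₀ ((convex_convexHull ℝ t).nullMeasurableSet μ)
    (measure_mono_null (fun x ⟨hxs, hxt⟩ => ?_) (addHaar_preimage_singleton μ hf c))
  exact le_antisymm (convexHull_min hs (convex_halfSpace_le f.isLinear c) hxs)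
    (convexHull_min ht (convex_halfSpace_ge f.isLinear c) hxt)

end Separation

def cornerSimplex (n : ℕ) (r : ℝ) : Set (Fin n → ℝ) := {x | (∀ i, 0 ≤ x i) ∧ ∑ i, x i ≤ r}

section CornerSimplex

variable {n : ℕ}

lemma convex_cornerSimplex (r : ℝ) : Convex ℝ (cornerSimplex n r) := by
  refine fun x hx y hy a b ha hb hab => ⟨fun i => ?_, ?_⟩
  · have := hx.1 i; have := hy.1 i
    simp only [Pi.add_apply, Pi.smul_apply, smul_eq_mul]
    positivity
  · simp only [Pi.add_apply, Pi.smul_apply, smul_eq_mul, Finset.sum_add_distrib,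
      ← Finset.mul_sum]
    linear_combination
      mul_le_mul_of_nonneg_left hx.2 ha + mul_le_mul_of_nonneg_left hy.2 hb + r * hab

lemma cornerSimplex_eq_empty {r : ℝ} (hr : r < 0) : cornerSimplex n r = ∅ :=
  eq_empty_of_forall_notMem fun _ ⟨hx, hsum⟩ =>
    (hsum.trans_lt hr).not_ge (Finset.sum_nonneg fun i _ => hx i)

lemma piFinSuccAbove_preimage_cornerSimplex (r : ℝ) :
    MeasurableEquiv.piFinSuccAbove (fun _ : Fin (n + 1) => ℝ) 0 ⁻¹'
      {q | 0 ≤ q.1 ∧ q.2 ∈ cornerSimplex n (r - q.1)} = cornerSimplex (n + 1) r := by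
  ext x
  simp [cornerSimplex, MeasurableEquiv.piFinSuccAbove, Fin.forall_fin_succ, Fin.sum_univ_succ,
    Fin.tail, le_sub_iff_add_le', and_assoc]

lemma integral_Icc_sub_pow_div_factorial {r : ℝ} (hr : 0 ≤ r) :
    ∫ t in Icc 0 r, (r - t) ^ n / n ! = r ^ (n + 1) / (n + 1)! := by
  rw [integral_Icc_eq_integral_Ioc, ← intervalIntegral.integral_of_le hr,
    intervalIntegral.integral_div, intervalIntegral.integral_comp_sub_left (fun t => t ^ n)]
  simp [integral_pow, Nat.factorial_succ]
  field_simp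

theorem volume_cornerSimplex {r : ℝ} (hr : 0 ≤ r) :
    volume (cornerSimplex n r) = ENNReal.ofReal (r ^ n / n !) := by
  induction n generalizing r with
  | zero =>
    have : cornerSimplex 0 r = univ := by ext x; simp [cornerSimplex, hr]
    rw [this, volume_pi, Measure.pi_of_empty]
    simp
  | succ n ih =>
    let B : Set (ℝ × (Fin n → ℝ)) := {q | 0 ≤ q.1 ∧ q.2 ∈ cornerSimplex n (r - q.1)}
    have hB : MeasurableSet B := by
      simp only [B, cornerSimplex, mem_ofPred_eq]
      measurability
    have hslice : ∀ t, volume (Prod.mk t ⁻¹' B)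
        = (Icc 0 r).indicator (fun t => ENNReal.ofReal ((r - t) ^ n / n !)) t := by
      intro t
      by_cases ht : t ∈ Icc 0 r
      · rw [indicator_of_mem ht, ← ih (sub_nonneg.2 ht.2)]
        congr 1; ext y; simp [B, ht.1]
      · rw [indicator_of_notMem ht, ← measure_empty (μ := (volume : Measure (Fin n → ℝ)))]
        congr 1; ext y
        rcases not_and_or.1 ht with ht | ht
        · simp [B, ht]
        · simp [B, cornerSimplex_eq_empty (sub_neg.2 (not_le.1 ht))]
    rw [← piFinSuccAbove_preimage_cornerSimplex,
      (volume_preserving_piFinSuccAbove (fun _ : Fin (n + 1) => ℝ) 0).measure_preimage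
        hB.nullMeasurableSet, Measure.volume_eq_prod, Measure.prod_apply hB,
      lintegral_congr hslice, lintegral_indicator measurableSet_Icc,
      ← ofReal_integral_eq_lintegral_ofReal, integral_Icc_sub_pow_div_factorial hr]
    · exact (by fun_prop : Continuous fun t : ℝ => (r - t) ^ n / n !).integrableOn_Icc
    · filter_upwards [ae_restrict_mem measurableSet_Icc] with t ht
      have := sub_nonneg.2 ht.2
      positivity

lemma convexHull_insert_zero_range_single :
    convexHull ℝ (insert 0 (range fun i => Pi.single i 1)) = cornerSimplex n 1 := by
  refine (convexHull_min ?_ (convex_cornerSimplex 1)).antisymm fun x ⟨hx, hsum⟩ => ?_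
  · rintro _ (rfl | ⟨i, rfl⟩)
    · simp [cornerSimplex]
    · refine ⟨fun j => ?_, by simp⟩
      simp only [Pi.single_apply]; split_ifs <;> norm_num
  have := (convex_convexHull ℝ (insert 0 (range fun i => Pi.single i (1 : ℝ)))).sum_mem
    (t := Finset.univ) (w := Fin.cons (1 - ∑ i, x i) x)
    (z := Fin.cons 0 fun i => Pi.single i 1) ?_ ?_ ?_
  · simpa [Fin.sum_univ_succ, ← pi_eq_sum_univ'] using this
  · intro j _
    cases j using Fin.cases <;> simp [hx, hsum]
  · simp [Fin.sum_univ_succ]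
  · intro j _
    cases j using Fin.cases
    · exact subset_convexHull ℝ _ (mem_insert _ _)
    · exact subset_convexHull ℝ _ (mem_insert_of_mem _ (mem_range_self _))

lemma image_cornerSimplex_one {E : Type*} [AddCommGroup E] [Module ℝ E] (p : E)
    (v : Fin n → E) :
    (fun x => p + Fintype.linearCombination ℝ v x) '' cornerSimplex n 1
      = convexHull ℝ (insert p (range fun i => p + v i)) := by
  let f : (Fin n → ℝ) →ᵃ[ℝ] E :=
    AffineMap.const ℝ _ p + (Fintype.linearCombination ℝ v).toAffineMap
  have hf : ⇑f = fun x => p + Fintype.linearCombination ℝ v x := rfl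
  rw [← hf, ← convexHull_insert_zero_range_single, f.image_convexHull, image_insert_eq,
    ← range_comp]
  simp [hf, Function.comp_def]

lemma det_fintypeLinearCombination (v : Fin n → Fin n → ℝ) :
    LinearMap.det (Fintype.linearCombination ℝ v) = (Matrix.of v).det := by
  rw [← LinearMap.det_toMatrix', ← Matrix.det_transpose]
  congr
  ext i j
  simp [LinearMap.toMatrix'_apply]

theorem volume_convexHull_insert_range (p : Fin n → ℝ) (q : Fin n → Fin n → ℝ) :
    volume (convexHull ℝ (insert p (range q)))
      = ENNReal.ofReal (|(Matrix.of fun i => q i - p).det| / n !) := by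
  rw [show range q = range fun i => p + (q i - p) by simp, ← image_cornerSimplex_one,
    ← image_image (p + ·), image_add_left, measure_preimage_add, Measure.addHaar_image_linearMap,
    det_fintypeLinearCombination, volume_cornerSimplex zero_le_one,
    ← ENNReal.ofReal_mul (abs_nonneg _)]
  simp [div_eq_mul_inv]

theorem add_sum_smul_mem_interior_convexHull {p : Fin n → ℝ} {q : Fin n → Fin n → ℝ}
    (hq : (Matrix.of fun i => q i - p).det ≠ 0) {t : Fin n → ℝ} (ht : ∀ i, 0 < t i)
    (hsum : ∑ i, t i < 1) :
    p + ∑ i, t i • (q i - p) ∈ interior (convexHull ℝ (insert p (range q))) := by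
  set L := Fintype.linearCombination ℝ fun i => q i - p
  rw [← det_fintypeLinearCombination] at hq
  have hopen : IsOpenMap fun x => p + L x :=
    (Homeomorph.addLeft p).isOpenMap.comp
      (L.equivOfDetNeZero hq).toContinuousLinearEquiv.toHomeomorph.isOpenMap
  let U := {x : Fin n → ℝ | (∀ i, 0 < x i) ∧ ∑ i, x i < 1}
  have hU : IsOpen U := by
    simp only [U, ofPred_and, ofPred_forall]
    exact (isOpen_iInter_of_finite fun i => isOpen_lt continuous_const (continuous_apply i)).inter
      (isOpen_lt (by fun_prop) continuous_const)
  have hUsub : U ⊆ cornerSimplex n 1 := fun x hx => ⟨fun i => (hx.1 i).le, hx.2.le⟩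
  rw [show range q = range fun i => p + (q i - p) by simp, ← image_cornerSimplex_one]
  exact interior_maximal (image_mono hUsub) (hopen U hU) ⟨t, ⟨ht, hsum⟩, rfl⟩

end CornerSimplex

noncomputable def tetrahedronVolume (p a b c : Fin 3 → ℝ) : ℝ :=
  |(Matrix.of ![a - p, b - p, c - p]).det| / 6

lemma tetrahedronVolume_nonneg (p a b c : Fin 3 → ℝ) : 0 ≤ tetrahedronVolume p a b c := by
  unfold tetrahedronVolume; positivity

lemma insert_range_three {α : Type*} (p a b c : α) :
    insert p (range ![a, b, c]) = {p, a, b, c} := by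
  ext; simp; tauto

theorem volume_convexHull_four (p a b c : Fin 3 → ℝ) :
    volume (convexHull ℝ {p, a, b, c}) = ENNReal.ofReal (tetrahedronVolume p a b c) := by
  rw [← insert_range_three, volume_convexHull_insert_range, tetrahedronVolume]
  congr 3

section Polytopes

variable {e : ℝ}

lemma lt_sqrt_one_sub_two_mul_sq (he : 0 ≤ e) (he' : e < 1 / 2) : e < √(1 - 2 * e ^ 2) :=
  (Real.lt_sqrt he).2 (by nlinarith)

lemma P1_eq_union (he : 0 < e) (he' : e < 1 / 2) :
    P1 e = convexHull ℝ {w3 e, w1, w4 e, w5 e} ∪ convexHull ℝ {w2 e, w1, w4 e, w5 e} := by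
  obtain ⟨δ, hδ⟩ : ∃ δ, √(1 - 2 * e ^ 2) = δ := ⟨_, rfl⟩
  have hδe : e < δ := hδ ▸ lt_sqrt_one_sub_two_mul_sq he.le he'
  have hδ₀ : 0 < δ := he.trans hδe
  have hw : (δ - e) / (2 * δ) + (δ + e) / (2 * δ) = 1 := by field_simp; ring
  have h23 : ![e, e, e] ∈ segment ℝ (w3 e) (w2 e) :=
    ⟨(δ - e) / (2 * δ), (δ + e) / (2 * δ), div_nonneg (by linarith) (by positivity),
      by positivity, hw, by ext i; fin_cases i <;> simp [w2, w3, hδ] <;> field_simp <;> ring⟩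
  have h45 : ![e, e, e] ∈ segment ℝ (w5 e) (w4 e) :=
    ⟨(δ - e) / (2 * δ), (δ + e) / (2 * δ), div_nonneg (by linarith) (by positivity),
      by positivity, hw, by ext i; fin_cases i <;> simp [w4, w5, hδ] <;> field_simp <;> ring⟩
  rw [P1, insert_comm w1 (w2 e), insert_comm w1 (w3 e), insert_comm (w2 e) (w3 e)]
  exact convexHull_insert_insert_eq_union h23 (segment_subset_convexHull (by simp) (by simp) h45)

lemma volume_P1 (he : 0 < e) (he' : e < 1 / 2) :
    volume (P1 e) = ENNReal.ofReal
      (tetrahedronVolume (w3 e) w1 (w4 e) (w5 e) + tetrahedronVolume (w2 e) w1 (w4 e) (w5 e)) := by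
  obtain ⟨δ, hδ⟩ : ∃ δ, √(1 - 2 * e ^ 2) = δ := ⟨_, rfl⟩
  have hδe : e < δ := hδ ▸ lt_sqrt_one_sub_two_mul_sq he.le he'
  -- `f = e` is the plane through `w1`, `w4 e`, `w5 e`
  let f : (Fin 3 → ℝ) →ₗ[ℝ] ℝ := (1 - e) • LinearMap.proj 0 + e • LinearMap.proj 2
  have hf : f ≠ 0 := fun h => by simpa [f, he.ne'] using LinearMap.congr_fun h (Pi.single 2 1)
  rw [P1_eq_union he he', addHaar_convexHull_union_convexHull volume hf (c := e),
    volume_convexHull_four, volume_convexHull_four,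
    ENNReal.ofReal_add (tetrahedronVolume_nonneg _ _ _ _) (tetrahedronVolume_nonneg _ _ _ _)]
  · simp [f, w1, w3, w4, w5, hδ]
    constructor <;> nlinarith
  · simp [f, w1, w2, w4, w5, hδ]
    constructor <;> nlinarith

lemma P2_eq_union (he : 0 < e) (he' : e < 1 / 2) :
    P2 e = convexHull ℝ {-w2 e, -w1, w3 e, w5 e} ∪ convexHull ℝ {w4 e, -w1, w3 e, w5 e} := by
  obtain ⟨δ, hδ⟩ : ∃ δ, √(1 - 2 * e ^ 2) = δ := ⟨_, rfl⟩
  have hδe : e < δ := hδ ▸ lt_sqrt_one_sub_two_mul_sq he.le he'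
  have hδ1 : δ ≤ 1 := hδ ▸ Real.sqrt_le_one.mpr (by nlinarith)
  have hδ₀ : 0 < δ := he.trans hδe
  set Λ := δ * (1 + e) + e * (1 + δ)
  have hΛ : 0 < Λ := by positivity
  -- the point where `[-w2 e, w4 e]` crosses the plane of `-w1`, `w3 e`, `w5 e`
  have hp : (δ * (1 + e) / Λ) • -w2 e + (e * (1 + δ) / Λ) • w4 e ∈
      convexHull ℝ {-w1, w3 e, w5 e} := by
    convert smul_add_smul_add_smul_mem_convexHull (x := -w1) (y := w3 e) (z := w5 e)
      (a := 2 * e * δ * (δ + e) / ((δ + e) * Λ))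
      (b := δ * (δ + δ * e + e - e ^ 2) / ((δ + e) * Λ))
      (c := e * (δ + δ * e + e - δ ^ 2) / ((δ + e) * Λ)) (by positivity)
      (div_nonneg (by nlinarith) (by positivity))
      (div_nonneg (mul_nonneg he.le (by nlinarith)) (by positivity))
      (by field_simp; ring) using 1
    ext i; fin_cases i <;> simp [w1, w2, w3, w4, w5, hδ] <;> field_simp <;> ring
  have hseg : (δ * (1 + e) / Λ) • -w2 e + (e * (1 + δ) / Λ) • w4 e ∈ segment ℝ (-w2 e) (w4 e) :=
    ⟨_, _, by positivity, by positivity, by rw [← add_div, div_self hΛ.ne'], rfl⟩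
  have hset : ({-w1, -w2 e, w3 e, w4 e, w5 e} : Set (Fin 3 → ℝ))
      = insert (-w2 e) (insert (w4 e) {-w1, w3 e, w5 e}) := by ext; simp; tauto
  rw [P2, hset]
  exact convexHull_insert_insert_eq_union hseg hp

lemma volume_P2 (he : 0 < e) (he' : e < 1 / 2) :
    volume (P2 e) = ENNReal.ofReal (tetrahedronVolume (-w2 e) (-w1) (w3 e) (w5 e)
      + tetrahedronVolume (w4 e) (-w1) (w3 e) (w5 e)) := by
  obtain ⟨δ, hδ⟩ : ∃ δ, √(1 - 2 * e ^ 2) = δ := ⟨_, rfl⟩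
  have hδe : e < δ := hδ ▸ lt_sqrt_one_sub_two_mul_sq he.le he'
  -- `f = e - δ` is the plane through `-w1`, `w3 e`, `w5 e`
  let f : (Fin 3 → ℝ) →ₗ[ℝ] ℝ :=
    (1 + e) • LinearMap.proj 0 + (1 + e) • LinearMap.proj 1 + (δ - e) • LinearMap.proj 2
  have hf : f ≠ 0 := fun h => by
    have := LinearMap.congr_fun h (Pi.single 0 1)
    simp [f] at this
    linarith
  rw [P2_eq_union he he', addHaar_convexHull_union_convexHull volume hf (c := e - δ),
    volume_convexHull_four, volume_convexHull_four,
    ENNReal.ofReal_add (tetrahedronVolume_nonneg _ _ _ _) (tetrahedronVolume_nonneg _ _ _ _)]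
  · simp [f, w1, w2, w3, w5, hδ]
    refine ⟨?_, ?_, ?_⟩ <;> nlinarith
  · simp [f, w1, w3, w4, w5, hδ]
    refine ⟨?_, ?_, ?_⟩ <;> nlinarith

lemma zero_notMem_P1 (he : 0 < e) : (0 : Fin 3 → ℝ) ∉ P1 e := by
  have hP1 : P1 e ⊆ {x | 0 < x 2} :=
    convexHull_min (by simp [insert_subset_iff, w1, w2, w3, w4, w5, he])
      (convex_halfSpace_gt (LinearMap.proj 2 : (Fin 3 → ℝ) →ₗ[ℝ] ℝ).isLinear 0)
  exact fun h => lt_irrefl (0 : ℝ) (hP1 h)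

lemma zero_mem_interior_P2 (he : 0 < e) (he' : e < 1 / 2) :
    (0 : Fin 3 → ℝ) ∈ interior (P2 e) := by
  obtain ⟨δ, hδ⟩ : ∃ δ, √(1 - 2 * e ^ 2) = δ := ⟨_, rfl⟩
  have hδe : e < δ := hδ ▸ lt_sqrt_one_sub_two_mul_sq he.le he'
  have hδ₀ : 0 < δ := he.trans hδe
  have hdet : (Matrix.of fun i => ![w3 e, w4 e, w5 e] i - -w1).det ≠ 0 := by
    simp [Matrix.det_fin_three, w1, w3, w4, w5, hδ]
    have : 0 < δ * (1 + e) * (δ + e) := by positivity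
    intro h
    linarith
  -- the barycentric coordinates of `0` with respect to `w3 e`, `w4 e`, `w5 e` (and `-w1`)
  have ht : ∀ i, 0 < ![e / ((δ + e) * (1 + e)), (δ - e) / (2 * δ * (1 + e)),
      (δ ^ 2 + e ^ 2) / (2 * δ * (δ + e) * (1 + e))] i := by
    intro i
    fin_cases i
    · simp; positivity
    · simpa using div_pos (sub_pos.2 hδe) (by positivity)
    · simp; positivity
  have hsub : convexHull ℝ {-w1, w3 e, w4 e, w5 e} ⊆ P2 e :=
    convexHull_mono (by intro; simp; tauto)
  refine interior_mono hsub ?_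
  rw [← insert_range_three]
  convert add_sum_smul_mem_interior_convexHull hdet ht ?_ using 1
  · ext i; fin_cases i <;> simp [Fin.sum_univ_three, w1, w3, w4, w5, hδ] <;> field_simp <;> ring
  · have hsum : e / ((δ + e) * (1 + e)) + (δ - e) / (2 * δ * (1 + e))
        + (δ ^ 2 + e ^ 2) / (2 * δ * (δ + e) * (1 + e)) = 1 / (1 + e) := by
      field_simp; ring
    simp only [Fin.sum_univ_three, Matrix.cons_val_zero, Matrix.cons_val_one, Matrix.cons_val_two,
      Matrix.head_cons, Matrix.tail_cons]
    rw [hsum, div_lt_one (by positivity)]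
    linarith

end Polytopes

lemma tendsto_nhdsGT_of_eqOn_ofReal {f : ℝ → ℝ≥0∞} {g : ℝ → ℝ} {a b : ℝ} (hab : a < b)
    (hg : ContinuousAt g a) (hfg : ∀ x ∈ Ioo a b, f x = ENNReal.ofReal (g x)) :
    Tendsto f (nhdsWithin a (Ioi a)) (nhds (ENNReal.ofReal (g a))) :=
  ((ENNReal.continuous_ofReal.tendsto _).comp hg.tendsto |>.mono_left nhdsWithin_le_nhds).congr'
    (eventually_of_mem (Ioo_mem_nhdsGT hab) fun x hx => (hfg x hx).symm)

lemma tendsto_volume_P1 :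
    Tendsto (fun e => volume (P1 e)) (nhdsWithin 0 (Ioi 0)) (nhds ((2 : ℝ≥0∞) / 3)) := by
  have h0 : tetrahedronVolume (w3 0) w1 (w4 0) (w5 0)
      + tetrahedronVolume (w2 0) w1 (w4 0) (w5 0) = 2 / 3 := by
    simp [tetrahedronVolume, w1, w2, w3, w4, w5, Matrix.det_fin_three]
    norm_num
  have hlim := tendsto_nhdsGT_of_eqOn_ofReal (by norm_num : (0 : ℝ) < 1 / 2) ?_
    fun e he => volume_P1 he.1 he.2
  · beta_reduce at hlim
    rwa [h0, ENNReal.ofReal_div_of_pos three_pos, ENNReal.ofReal_ofNat, ENNReal.ofReal_ofNat]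
      at hlim
  · unfold tetrahedronVolume w1 w2 w3 w4 w5; fun_prop

lemma tendsto_volume_P2 :
    Tendsto (fun e => volume (P2 e)) (nhdsWithin 0 (Ioi 0)) (nhds ((1 : ℝ≥0∞) / 3)) := by
  have h0 : tetrahedronVolume (-w2 0) (-w1) (w3 0) (w5 0)
      + tetrahedronVolume (w4 0) (-w1) (w3 0) (w5 0) = 1 / 3 := by
    simp [tetrahedronVolume, w1, w2, w3, w4, w5, Matrix.det_fin_three]
    norm_num
  have hlim := tendsto_nhdsGT_of_eqOn_ofReal (by norm_num : (0 : ℝ) < 1 / 2) ?_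
    fun e he => volume_P2 he.1 he.2
  · beta_reduce at hlim
    rwa [h0, ENNReal.ofReal_div_of_pos three_pos, ENNReal.ofReal_one, ENNReal.ofReal_ofNat]
      at hlim
  · unfold tetrahedronVolume w1 w2 w3 w4 w5; fun_prop

/-- In ℝ³ there is an antipodal point set of 10 points on the unit sphere with
an antipodal polytope `P1 e` not containing the origin and an antipodal
polytope `P2 e` containing the origin in its interior, such that
`Vol (P1 e) > Vol (P2 e)`; moreover as e → 0⁺, `Vol (P1 e) → 2/3` and
`Vol (P2 e) → 1/3`. -/
theorem stmt_12 :
    (∃ ε₀ : ℝ, 0 < ε₀ ∧ ∀ e : ℝ, 0 < e → e < ε₀ →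
      (0 : Fin 3 → ℝ) ∉ P1 e ∧
      (0 : Fin 3 → ℝ) ∈ interior (P2 e) ∧
      volume (P2 e) < volume (P1 e)) ∧
    Tendsto (fun e => volume (P1 e)) (nhdsWithin 0 (Set.Ioi 0))
      (nhds ((2 : ℝ≥0∞) / 3)) ∧
    Tendsto (fun e => volume (P2 e)) (nhdsWithin 0 (Set.Ioi 0))
      (nhds ((1 : ℝ≥0∞) / 3)) := by
  refine ⟨?_, tendsto_volume_P1, tendsto_volume_P2⟩
  have hlt : (1 : ℝ≥0∞) / 3 < 2 / 3 :=
    ENNReal.div_lt_div_right (by norm_num) (by norm_num) (by norm_num)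
  have hsmall : ∀ᶠ e in nhdsWithin 0 (Ioi 0), e ∈ Ioo (0 : ℝ) (1 / 2) :=
    Ioo_mem_nhdsGT (by norm_num)
  obtain ⟨ε₀, hε₀, hsub⟩ := mem_nhdsGT_iff_exists_Ioo_subset.1
    (hsmall.and (tendsto_volume_P2.eventually_lt tendsto_volume_P1 hlt))
  refine ⟨ε₀, hε₀, fun e he heε => ?_⟩
  obtain ⟨⟨he, he'⟩, hvol⟩ := hsub ⟨he, heε⟩
  exact ⟨zero_notMem_P1 he, zero_mem_interior_P2 he he', hvol⟩
end
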